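/- arXiv:1901.07349 — 2 statements merged into one kernel-verified Lean document; each statement's English description precedes it below -/
import Mathlib

section
/- Let c₁, c₂ be purely imaginary unit quaternions, φ₁, φ₂ ∈ (0,π), ξ₁, ξ₂ ∈ [0,π], and set t(φ,ξ) := arccos(cos²φ + sin²φ · cos ξ). If T := t(φ₁,ξ₁) + t(φ₂,ξ₂) ∈ [0,π], then the Minkowski product S(c₁,φ₁,ξ₁) ⊗ S(c₂,φ₂,ξ₂) is contained in the spherical cap U(exp(φ₁ c₁) exp(φ₂ c₂), T). -/
open Real Set

noncomputable section

abbrev H : Type := Quaternion ℝ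

/-- Inner product on ℍ regarded as ℝ⁴ : ⟨A,B⟩ = re(A B*). -/
def qInner (a b : H) : ℝ := (a * star b).re

/-- The set of unit quaternions, the 3-sphere S³. -/
def S3 : Set H := {u : H | ‖u‖ = 1}

/-- Spherical cap U(U₀,t) = {U ∈ S³ : ⟨U,U₀⟩ ≥ cos t}. -/
def cap (u₀ : H) (t : ℝ) : Set H := {u : H | u ∈ S3 ∧ qInner u u₀ ≥ Real.cos t}

/-- Minkowski product of two quaternion sets. -/
def mprod (U V : Set H) : Set H := Set.image2 (· * ·) U V

/-- exp(s n) = cos s + (sin s) n for purely imaginary unit n. -/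
def qexp (s : ℝ) (n : H) : H := (Real.cos s : H) + Real.sin s • n

/-- The boundary (frontier) of A in the subspace topology of S³:
for A ⊆ S³ this coincides with the frontier taken in the topological subspace S³. -/
def bdryIn (A : Set H) : Set H := S3 ∩ closure A ∩ closure (S3 \ A)

/-- S(c,φ,ξ) = {cos φ + (sin φ) m : m purely imaginary unit, ⟨m,c⟩ ≥ cos ξ}. -/
def Sset (c : H) (φ ξ : ℝ) : Set H :=
  {u : H | ∃ m : H, m.re = 0 ∧ ‖m‖ = 1 ∧ qInner m c ≥ Real.cos ξ ∧ u = qexp φ m}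

/-! For unit quaternions the angle `∠(a, b) = arccos ⟨a, b⟩` satisfies the triangle inequality and
is invariant under left and right multiplication by unit quaternions. Since
`⟨exp(φ m), exp(φ c)⟩ = cos² φ + sin² φ ⟨m, c⟩`, every point of `S(cᵢ, φᵢ, ξᵢ)` lies at angle at most
`t(φᵢ, ξᵢ)` from `Uᵢ = exp(φᵢ cᵢ)`. For `u₁ u₂` in the product, `∠(u₁ u₂, U₁ u₂) = ∠(u₁, U₁)` and
`∠(U₁ u₂, U₁ U₂) = ∠(u₂, U₂)`, so `∠(u₁ u₂, U₁ U₂) ≤ T ≤ π` and `⟨u₁ u₂, U₁ U₂⟩ ≥ cos T`. -/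

open InnerProductGeometry
open scoped RealInnerProductSpace

section AngleInvariance

variable {E F : Type*} [NormedAddCommGroup E] [InnerProductSpace ℝ E]
  [NormedAddCommGroup F] [InnerProductSpace ℝ F]

theorem inner_map_map_of_norm_map (f : E →+ F) (k : ℝ) (hf : ∀ x, ‖f x‖ = k * ‖x‖) (a b : E) :
    ⟪f a, f b⟫ = k ^ 2 * ⟪a, b⟫ := by
  have hfab := norm_add_sq_real (f a) (f b)
  rw [← map_add, hf, hf, hf] at hfab
  linear_combination (-1 / 2 : ℝ) * hfab + (k ^ 2 / 2) * norm_add_sq_real a b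

theorem angle_map_map_of_norm_map (f : E →+ F) {k : ℝ} (hk : k ≠ 0) (hf : ∀ x, ‖f x‖ = k * ‖x‖)
    (a b : E) : angle (f a) (f b) = angle a b := by
  unfold angle
  rw [inner_map_map_of_norm_map f k hf, hf, hf,
    show k * ‖a‖ * (k * ‖b‖) = k ^ 2 * (‖a‖ * ‖b‖) by ring,
    mul_div_mul_left _ _ (pow_ne_zero 2 hk)]

end AngleInvariance

theorem Quaternion.angle_mul_mul_right (a b : H) {w : H} (hw : w ≠ 0) :
    angle (a * w) (b * w) = angle a b :=
  angle_map_map_of_norm_map (AddMonoidHom.mulRight w) (norm_ne_zero_iff.2 hw)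
    (fun x => by simp [mul_comm]) a b

theorem Quaternion.angle_mul_mul_left (a b : H) {w : H} (hw : w ≠ 0) :
    angle (w * a) (w * b) = angle a b :=
  angle_map_map_of_norm_map (AddMonoidHom.mulLeft w) (norm_ne_zero_iff.2 hw)
    (fun x => by simp) a b

theorem qInner_eq_inner (a b : H) : qInner a b = ⟪a, b⟫ := rfl

theorem angle_eq_arccos_qInner {a b : H} (ha : ‖a‖ = 1) (hb : ‖b‖ = 1) :
    angle a b = Real.arccos (qInner a b) := by
  rw [angle, ha, hb, mul_one, div_one, qInner_eq_inner]

theorem mem_cap_of_angle_le {u u₀ : H} (hu : ‖u‖ = 1) (hu₀ : ‖u₀‖ = 1) {t : ℝ}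
    (h : angle u u₀ ≤ t) (ht : t ≤ π) : u ∈ cap u₀ t := by
  refine ⟨hu, ?_⟩
  rw [ge_iff_le, qInner_eq_inner, ← cos_angle_mul_norm_mul_norm, hu, hu₀, mul_one, mul_one]
  exact Real.cos_le_cos_of_nonneg_of_le_pi (angle_nonneg u u₀) ht h

theorem qInner_qexp_qexp (φ : ℝ) {m c : H} (hm : m.re = 0) (hc : c.re = 0) :
    qInner (qexp φ m) (qexp φ c) = Real.cos φ ^ 2 + Real.sin φ ^ 2 * qInner m c := by
  simp only [qInner, qexp, star_add, Quaternion.star_coe, Quaternion.star_smul, Quaternion.re_mul,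
    Quaternion.re_add, Quaternion.re_coe, Quaternion.re_smul, hm, smul_eq_mul, mul_zero, add_zero,
    Quaternion.re_star, hc, Quaternion.imI_add, Quaternion.imI_coe, Quaternion.imI_smul, zero_add,
    Quaternion.imI_star, mul_neg, sub_neg_eq_add, Quaternion.imJ_add, Quaternion.imJ_coe,
    Quaternion.imJ_smul, Quaternion.imJ_star, Quaternion.imK_add, Quaternion.imK_coe,
    Quaternion.imK_smul, Quaternion.imK_star]
  ring

theorem norm_qexp (φ : ℝ) {m : H} (hm : m.re = 0) (hm' : ‖m‖ = 1) : ‖qexp φ m‖ = 1 := by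
  have h := qInner_qexp_qexp φ hm hm
  rw [qInner_eq_inner, qInner_eq_inner, real_inner_self_eq_norm_sq, real_inner_self_eq_norm_sq, hm',
    one_pow, mul_one, Real.cos_sq_add_sin_sq] at h
  exact (pow_eq_one_iff_of_nonneg (norm_nonneg _) two_ne_zero).1 h

theorem norm_eq_one_and_angle_le_of_mem_Sset {c : H} (hc : c.re = 0) (hc' : ‖c‖ = 1)
    {φ ξ : ℝ} {u : H} (hu : u ∈ Sset c φ ξ) :
    ‖u‖ = 1 ∧ angle u (qexp φ c) ≤ Real.arccos (Real.cos φ ^ 2 + Real.sin φ ^ 2 * Real.cos ξ) := by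
  obtain ⟨m, hm, hm', hmc, rfl⟩ := hu
  refine ⟨norm_qexp φ hm hm', ?_⟩
  rw [angle_eq_arccos_qInner (norm_qexp φ hm hm') (norm_qexp φ hc hc'), qInner_qexp_qexp φ hm hc]
  exact Real.arccos_le_arccos (by gcongr)

theorem stmt13_general (c₁ c₂ : H) (hc₁ : c₁.re = 0) (hc₁' : ‖c₁‖ = 1)
    (hc₂ : c₂.re = 0) (hc₂' : ‖c₂‖ = 1)
    (φ₁ φ₂ : ℝ) (ξ₁ ξ₂ : ℝ)
    (hT : Real.arccos (Real.cos φ₁ ^ 2 + Real.sin φ₁ ^ 2 * Real.cos ξ₁)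
        + Real.arccos (Real.cos φ₂ ^ 2 + Real.sin φ₂ ^ 2 * Real.cos ξ₂) ∈ Set.Icc 0 π) :
    mprod (Sset c₁ φ₁ ξ₁) (Sset c₂ φ₂ ξ₂) ⊆
      cap (qexp φ₁ c₁ * qexp φ₂ c₂)
        (Real.arccos (Real.cos φ₁ ^ 2 + Real.sin φ₁ ^ 2 * Real.cos ξ₁)
          + Real.arccos (Real.cos φ₂ ^ 2 + Real.sin φ₂ ^ 2 * Real.cos ξ₂)) := by
  rintro _ ⟨u₁, hu₁, u₂, hu₂, rfl⟩
  obtain ⟨hnu₁, hangle₁⟩ := norm_eq_one_and_angle_le_of_mem_Sset hc₁ hc₁' hu₁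
  obtain ⟨hnu₂, hangle₂⟩ := norm_eq_one_and_angle_le_of_mem_Sset hc₂ hc₂' hu₂
  set U₁ := qexp φ₁ c₁
  set U₂ := qexp φ₂ c₂
  have hnU₁ : ‖U₁‖ = 1 := norm_qexp φ₁ hc₁ hc₁'
  have hnU₂ : ‖U₂‖ = 1 := norm_qexp φ₂ hc₂ hc₂'
  refine mem_cap_of_angle_le (by simp [hnu₁, hnu₂]) (by simp [hnU₁, hnU₂]) ?_ hT.2
  calc angle (u₁ * u₂) (U₁ * U₂)
      ≤ angle (u₁ * u₂) (U₁ * u₂) + angle (U₁ * u₂) (U₁ * U₂) := angle_le_angle_add_angle _ _ _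
    _ = angle u₁ U₁ + angle u₂ U₂ := by
      rw [Quaternion.angle_mul_mul_right _ _ (norm_ne_zero_iff.1 (by simp [hnu₂])),
        Quaternion.angle_mul_mul_left _ _ (norm_ne_zero_iff.1 (by simp [hnU₁]))]
    _ ≤ _ := add_le_add hangle₁ hangle₂

theorem stmt13 (c₁ c₂ : H) (hc₁ : c₁.re = 0) (hc₁' : ‖c₁‖ = 1)
    (hc₂ : c₂.re = 0) (hc₂' : ‖c₂‖ = 1)
    (φ₁ φ₂ : ℝ) (hφ₁ : φ₁ ∈ Set.Ioo 0 π) (hφ₂ : φ₂ ∈ Set.Ioo 0 π)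
    (ξ₁ ξ₂ : ℝ) (hξ₁ : ξ₁ ∈ Set.Icc 0 π) (hξ₂ : ξ₂ ∈ Set.Icc 0 π)
    (hT : Real.arccos (Real.cos φ₁ ^ 2 + Real.sin φ₁ ^ 2 * Real.cos ξ₁)
        + Real.arccos (Real.cos φ₂ ^ 2 + Real.sin φ₂ ^ 2 * Real.cos ξ₂) ∈ Set.Icc 0 π) :
    mprod (Sset c₁ φ₁ ξ₁) (Sset c₂ φ₂ ξ₂) ⊆
      cap (qexp φ₁ c₁ * qexp φ₂ c₂)
        (Real.arccos (Real.cos φ₁ ^ 2 + Real.sin φ₁ ^ 2 * Real.cos ξ₁)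
          + Real.arccos (Real.cos φ₂ ^ 2 + Real.sin φ₂ ^ 2 * Real.cos ξ₂)) :=
  stmt13_general c₁ c₂ hc₁ hc₁' hc₂ hc₂' φ₁ φ₂ ξ₁ ξ₂ hT
end
end

section
/- Let U, V ⊆ S³, let 𝒰 ∈ U and 𝒱 ∈ V. Assume there exist s ∈ (0, π/2) and 𝒫 ∈ S³ with re 𝒫 = cos s (so that 1 lies on the boundary of the spherical cap U(𝒫,s) in S³), such that {𝒰* W : W ∈ U} ⊆ U(𝒫,s) and {W 𝒱* : W ∈ V} ⊆ U(𝒫,s). Then the product 𝒰𝒱 belongs to the boundary of the Minkowski product U ⊗ V in the topology of S³. -/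
open Real Set

noncomputable section

/-!
The angle between unit quaternions is a bi-invariant metric on S³, and `cap P s`
is its closed ball of radius `s` about `P`; so `cap P s * cap P s ⊆ cap (P²) (2s)` and therefore
`u⁻¹ (U ⊗ V) v⁻¹ ⊆ cap (P²) (2s)`. Writing `P = exp(s n)` with `n` a pure unit quaternion,
`P² = exp(2s n)`, and `exp(-t n)` lies at angle `2s + t` from it, i.e. outside the cap, for small
`t > 0`. Hence `u exp(-t n) v ∉ U ⊗ V` while `u exp(-t n) v → uv`.
-/

open Quaternion InnerProductGeometry Filter Topology

lemma mul_mem_S3 {a b : H} (ha : a ∈ S3) (hb : b ∈ S3) : a * b ∈ S3 := by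
  show ‖a * b‖ = 1
  rw [norm_mul, ha.out, hb.out, one_mul]

lemma normSq_eq_one_of_mem_S3 {a : H} (ha : a ∈ S3) : normSq a = 1 := by
  rw [normSq_eq_norm_mul_self, ha.out, one_mul]

lemma star_mul_self_of_mem_S3 {a : H} (ha : a ∈ S3) : star a * a = 1 := by
  rw [star_mul_self, normSq_eq_one_of_mem_S3 ha, coe_one]

lemma mul_star_self_of_mem_S3 {a : H} (ha : a ∈ S3) : a * star a = 1 := by
  rw [self_mul_star, normSq_eq_one_of_mem_S3 ha, coe_one]

lemma angle_mul_left {a : H} (ha : a ∈ S3) (x y : H) : angle (a * x) (a * y) = angle x y :=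
  (⟨LinearMap.mulLeft ℝ a, fun z => by simp [norm_mul, ha.out]⟩ : H →ₗᵢ[ℝ] H).angle_map x y

lemma angle_mul_right {a : H} (ha : a ∈ S3) (x y : H) : angle (x * a) (y * a) = angle x y :=
  (⟨LinearMap.mulRight ℝ a, fun z => by simp [norm_mul, ha.out]⟩ : H →ₗᵢ[ℝ] H).angle_map x y

lemma mem_cap_iff_angle_le {x P : H} (hP : P ∈ S3) {s : ℝ} (hs₀ : 0 ≤ s) (hsπ : s ≤ π) :
    x ∈ cap P s ↔ x ∈ S3 ∧ angle x P ≤ s := by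
  refine and_congr_right fun hx => ?_
  have hcos : cos (angle x P) = qInner x P := by
    rw [cos_angle, hx.out, hP.out, mul_one, div_one, qInner, inner_def]
  rw [ge_iff_le, ← hcos, strictAntiOn_cos.le_iff_ge ⟨hs₀, hsπ⟩ ⟨angle_nonneg x P, angle_le_pi x P⟩]

lemma mul_mem_cap {P Q x y : H} (hP : P ∈ S3) (hQ : Q ∈ S3) {s t : ℝ} (hs : 0 ≤ s) (ht : 0 ≤ t)
    (hst : s + t ≤ π) (hx : x ∈ cap P s) (hy : y ∈ cap Q t) : x * y ∈ cap (P * Q) (s + t) := by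
  rw [mem_cap_iff_angle_le hP hs (by linarith)] at hx
  rw [mem_cap_iff_angle_le hQ ht (by linarith)] at hy
  rw [mem_cap_iff_angle_le (mul_mem_S3 hP hQ) (by linarith) hst]
  refine ⟨mul_mem_S3 hx.1 hy.1, ?_⟩
  calc angle (x * y) (P * Q) ≤ angle (x * y) (x * Q) + angle (x * Q) (P * Q) :=
        angle_le_angle_add_angle _ _ _
    _ = angle y Q + angle x P := by rw [angle_mul_left hx.1, angle_mul_right hQ]
    _ ≤ s + t := by linarith [hx.2, hy.2]

lemma qexp_zero (n : H) : qexp 0 n = 1 := by simp [qexp]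

lemma continuous_qexp (n : H) : Continuous fun a => qexp a n :=
  (continuous_coe.comp continuous_cos).add (continuous_sin.smul continuous_const)

section qexp

variable {n : H}

lemma qexp_mul_qexp (hn : n * n = -1) (a b : ℝ) : qexp a n * qexp b n = qexp (a + b) n := by
  simp only [qexp, add_mul, mul_add, smul_mul_smul_comm, hn, coe_mul_eq_smul, mul_coe_eq_smul,
    cos_add, sin_add]
  ext <;> simp <;> ring

lemma star_qexp (hn : n.re = 0) (a : ℝ) : star (qexp a n) = qexp (-a) n := by
  rw [qexp, qexp, star_add, star_coe, Quaternion.star_smul, star_eq_neg.2 hn, cos_neg, sin_neg,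
    smul_neg, neg_smul]

lemma qexp_mem_S3 (hn : n.re = 0) (hnn : n * n = -1) (a : ℝ) : qexp a n ∈ S3 := by
  have h : normSq (qexp a n) = 1 := by
    rw [← coe_inj, ← self_mul_star, star_qexp hn, qexp_mul_qexp hnn, add_neg_cancel, qexp_zero,
      coe_one]
  show ‖qexp a n‖ = 1
  nlinarith [normSq_eq_norm_mul_self (qexp a n), norm_nonneg (qexp a n)]

lemma qInner_qexp_qexp_s19 (hn : n.re = 0) (hnn : n * n = -1) (a b : ℝ) :
    qInner (qexp a n) (qexp b n) = cos (a - b) := by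
  rw [qInner, star_qexp hn, qexp_mul_qexp hnn, qexp, re_add, re_coe, re_smul, hn, smul_zero,
    add_zero, sub_eq_add_neg]

lemma qexp_neg_not_mem_cap (hn : n.re = 0) (hnn : n * n = -1) {r t : ℝ} (hr : 0 ≤ r) (ht : 0 < t)
    (hrt : r + t ≤ π) :
    qexp (-t) n ∉ cap (qexp r n) r := by
  rintro ⟨-, h⟩
  rw [qInner_qexp_qexp_s19 hn hnn, ← neg_add', cos_neg, add_comm, ge_iff_le] at h
  exact (strictAntiOn_cos ⟨hr, by linarith⟩ ⟨by linarith, hrt⟩ (by linarith)).not_ge h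

end qexp

lemma exists_qexp_eq {P : H} (hP : P ∈ S3) {s : ℝ} (hPre : P.re = cos s) (hs : sin s ≠ 0) :
    ∃ n : H, n.re = 0 ∧ n * n = -1 ∧ qexp s n = P := by
  refine ⟨(sin s)⁻¹ • P.im, by simp, ?_, ?_⟩
  · have h1 : normSq P = 1 := normSq_eq_one_of_mem_S3 hP
    have h2 : normSq P.im = sin s ^ 2 := by
      rw [normSq_def'] at h1 ⊢
      simp only [re_im, imI_im, imJ_im, imK_im]
      rw [hPre] at h1
      linarith [sin_sq_add_cos_sq s]
    rw [smul_mul_smul_comm, ← pow_two P.im, im_sq, h2, ← mul_inv, ← pow_two, ← coe_neg,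
      ← coe_mul_eq_smul, ← coe_mul, mul_neg, inv_mul_cancel₀ (pow_ne_zero 2 hs), coe_neg, coe_one]
  · rw [qexp, smul_smul, mul_inv_cancel₀ hs, one_smul, ← hPre, re_add_im]

theorem stmt19 (U V : Set H) (hU : U ⊆ S3) (hV : V ⊆ S3)
    (u v : H) (hu : u ∈ U) (hv : v ∈ V)
    (s : ℝ) (hs : s ∈ Set.Ioo 0 (π / 2))
    (P : H) (hP : P ∈ S3) (hPre : P.re = Real.cos s)
    (h₁ : (fun w : H => star u * w) '' U ⊆ cap P s)
    (h₂ : (fun w : H => w * star v) '' V ⊆ cap P s) :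
    u * v ∈ bdryIn (mprod U V) := by
  obtain ⟨hs₀, hs₁⟩ := hs
  have hu₁ := hU hu
  have hv₁ := hV hv
  obtain ⟨n, hn, hnn, rfl⟩ :=
    exists_qexp_eq hP hPre (sin_pos_of_pos_of_lt_pi hs₀ (by linarith)).ne'
  have hcap : ∀ w ∈ mprod U V, star u * w * star v ∈ cap (qexp (2 * s) n) (2 * s) := by
    rintro _ ⟨w₁, hw₁, w₂, hw₂, rfl⟩
    have := mul_mem_cap hP hP hs₀.le hs₀.le (by linarith) (h₁ ⟨w₁, hw₁, rfl⟩) (h₂ ⟨w₂, hw₂, rfl⟩)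
    rwa [qexp_mul_qexp hnn, ← two_mul, ← mul_assoc, mul_assoc (star u)] at this
  have hout : ∀ t ∈ Ioc 0 (π - 2 * s), u * qexp (-t) n * v ∈ S3 \ mprod U V := by
    rintro t ⟨ht₀, htπ⟩
    refine ⟨mul_mem_S3 (mul_mem_S3 hu₁ (qexp_mem_S3 hn hnn _)) hv₁, fun hmem => ?_⟩
    have hq : star u * (u * qexp (-t) n * v) * star v = qexp (-t) n := by
      rw [← mul_assoc, ← mul_assoc, star_mul_self_of_mem_S3 hu₁, one_mul, mul_assoc,
        mul_star_self_of_mem_S3 hv₁, mul_one]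
    exact qexp_neg_not_mem_cap hn hnn (by linarith) ht₀ (by linarith) (hq ▸ hcap _ hmem)
  refine ⟨⟨mul_mem_S3 hu₁ hv₁, subset_closure (mem_image2_of_mem hu hv)⟩, ?_⟩
  have htend : Tendsto (fun t => u * qexp (-t) n * v) (𝓝[>] 0) (𝓝 (u * v)) := by
    have := ((continuous_qexp n).comp continuous_neg).tendsto 0
    simpa [qexp_zero] using ((this.const_mul u).mul_const v).mono_left nhdsWithin_le_nhds
  exact mem_closure_of_tendsto htend
    (mem_of_superset (Ioc_mem_nhdsGT (by linarith)) hout)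
end
end
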